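/- arXiv:2308.09609 — 2 statements merged into one kernel-verified Lean document; each statement's English description precedes it below -/
import Mathlib

section
/- If f ∈ W^{1,∞}(ℝ^d) (i.e., f is bounded and Lipschitz) and λ satisfies 0 < λ ≤ (2‖f‖_{L∞}/‖∇f‖_{L∞}) · exp(-4δ^{-1}‖f‖_{L∞}), then f obeys the modulus of continuity ω_λ(ξ) := ω̄(ξ/λ), i.e., |f(x) - f(y)| ≤ ω_λ(|x-y|) for all x ≠ y. -/
/-!
Write `t = 4M/δ`, so that `2M = (δ/2) t` and the hypothesis on `λ` reads `Kλ ≤ (δ/2) t e^{-t}`.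
With `ξ = |x - y|/λ`, the bounds `|f x - f y| ≤ 2M` and `|f x - f y| ≤ K|x - y| = Kλξ` give
`|f x - f y| ≤ (δ/2) min(t, t e^{-t} ξ)`. Since `t e^{-t} ≤ 1`, this is at most `(δ/2) ξ`, which is
below `ω̄(ξ) ≥ (3/4) δ ξ` for `ξ ≤ 1`; for `ξ > 1` the minimum is at most `1 + log ξ`, because the
function `t ↦ t e^{-t} ξ` stays below it once `t ≥ log ξ`.
-/

open Real

lemma abs_sub_le_min_of_bounded_of_lipschitz {E : Type*} [SeminormedAddCommGroup E]
    {M K : ℝ} {f : E → ℝ} (hfb : ∀ x, |f x| ≤ M) (hfl : ∀ x y, |f x - f y| ≤ K * ‖x - y‖)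
    (x y : E) : |f x - f y| ≤ min (2 * M) (K * ‖x - y‖) :=
  le_min ((abs_sub _ _).trans (by linarith [hfb x, hfb y])) (hfl x y)

lemma mul_exp_neg_le_one (t : ℝ) : t * exp (-t) ≤ 1 :=
  (mul_exp_neg_le_exp_neg_one t).trans (exp_le_one_iff.mpr (by norm_num))

lemma min_mul_exp_neg_mul_le_one_add_log (t : ℝ) {ξ : ℝ} (hξ : 1 ≤ ξ) :
    min t (t * exp (-t) * ξ) ≤ 1 + log ξ := by
  have hs : 0 ≤ log ξ := log_nonneg hξ
  rcases le_or_gt t (log ξ) with hts | hts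
  · exact (min_le_left _ _).trans (by linarith)
  · set u := t - log ξ
    have hsplit : t * exp (-t) * ξ = u * exp (-u) + log ξ * exp (-u) := by
      rw [← exp_log (zero_lt_one.trans_le hξ)]
      simp only [u, log_exp, neg_sub, exp_sub, exp_neg]
      field_simp
      ring
    have hdecay : log ξ * exp (-u) ≤ log ξ :=
      mul_le_of_le_one_right hs (exp_le_one_iff.mpr (by linarith))
    calc min t (t * exp (-t) * ξ) ≤ t * exp (-t) * ξ := min_le_right _ _
      _ ≤ 1 + log ξ := by rw [hsplit]; linarith [mul_exp_neg_le_one u]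

lemma half_mul_le_sub_rpow_div_four {μ ξ : ℝ} (hμ : 0 ≤ μ) (hξ₀ : 0 ≤ ξ) (hξ₁ : ξ ≤ 1) :
    ξ / 2 ≤ ξ - ξ ^ (1 + μ) / 4 := by
  linarith [rpow_le_self_of_le_one hξ₀ hξ₁ (by linarith : (1 : ℝ) ≤ 1 + μ)]

theorem stmt_1_general {d : ℕ} (δ μ M K lam : ℝ) (hδ : 0 < δ) (hμ : μ ∈ Set.Ioo (0:ℝ) 1)
    (hK : 0 < K)
    (f : EuclideanSpace ℝ (Fin d) → ℝ)
    (hfb : ∀ x, |f x| ≤ M) (hfl : ∀ x y, |f x - f y| ≤ K * ‖x - y‖)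
    (hlam : 0 < lam) (hlam2 : lam ≤ 2 * M / K * Real.exp (-(4 * M / δ)))
    (ω : ℝ → ℝ)
    (hω : ∀ ξ, ω ξ = if ξ ≤ 1 then δ * (ξ - ξ ^ (1 + μ) / 4)
                     else 3 * δ / 4 + δ / 2 * Real.log ξ) :
    ∀ x y : EuclideanSpace ℝ (Fin d), x ≠ y → |f x - f y| ≤ ω (‖x - y‖ / lam) := by
  intro x y _
  set ξ := ‖x - y‖ / lam
  set t := 4 * M / δ
  have hMt : 2 * M = δ / 2 * t := by simp only [t]; field_simp; ring
  have hLip : K * ‖x - y‖ ≤ δ / 2 * (t * exp (-t) * ξ) := by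
    have hKlam : K * lam ≤ 2 * M * exp (-t) := by
      calc K * lam ≤ K * (2 * M / K * exp (-t)) := by gcongr
        _ = 2 * M * exp (-t) := by field_simp
    calc K * ‖x - y‖ = K * lam * ξ := by simp only [ξ]; field_simp
      _ ≤ 2 * M * exp (-t) * ξ := by gcongr
      _ = δ / 2 * (t * exp (-t) * ξ) := by rw [hMt]; ring
  have hdiff : |f x - f y| ≤ δ / 2 * min t (t * exp (-t) * ξ) := by
    rw [mul_min_of_nonneg _ _ (by positivity), ← hMt]
    exact (abs_sub_le_min_of_bounded_of_lipschitz hfb hfl x y).trans (min_le_min_left _ hLip)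
  rw [hω]
  split_ifs with hξ
  · have hξ₀ : 0 ≤ ξ := by positivity
    calc |f x - f y| ≤ δ / 2 * (t * exp (-t) * ξ) := hdiff.trans (by gcongr; exact min_le_right _ _)
      _ ≤ δ / 2 * ξ := by gcongr; exact mul_le_of_le_one_left hξ₀ (mul_exp_neg_le_one t)
      _ = δ * (ξ / 2) := by ring
      _ ≤ δ * (ξ - ξ ^ (1 + μ) / 4) := by gcongr; exact half_mul_le_sub_rpow_div_four hμ.1.le hξ₀ hξ
  · calc |f x - f y| ≤ δ / 2 * (1 + log ξ) :=
          hdiff.trans (by gcongr; exact min_mul_exp_neg_mul_le_one_add_log t (by linarith))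
      _ ≤ 3 * δ / 4 + δ / 2 * log ξ := by linarith

theorem stmt_1 {d : ℕ} (δ μ M K lam : ℝ) (hδ : 0 < δ) (hμ : μ ∈ Set.Ioo (0:ℝ) 1)
    (hM : 0 < M) (hK : 0 < K)
    (f : EuclideanSpace ℝ (Fin d) → ℝ)
    (hfb : ∀ x, |f x| ≤ M) (hfl : ∀ x y, |f x - f y| ≤ K * ‖x - y‖)
    (hlam : 0 < lam) (hlam2 : lam ≤ 2 * M / K * Real.exp (-(4 * M / δ)))
    (ω : ℝ → ℝ)
    (hω : ∀ ξ, ω ξ = if ξ ≤ 1 then δ * (ξ - ξ ^ (1 + μ) / 4)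
                     else 3 * δ / 4 + δ / 2 * Real.log ξ) :
    ∀ x y : EuclideanSpace ℝ (Fin d), x ≠ y → |f x - f y| ≤ ω (‖x - y‖ / lam) :=
  stmt_1_general δ μ M K lam hδ hμ hK f hfb hfl hlam hlam2 ω hω
end

section
/- Let ω_λ be as in (def.omg) with δ > 0, λ > 0, μ ∈ (0, min{α,1}), α ∈ (0,2). Then for every ξ > λ, one has ω_λ(2η+ξ) - ω_λ(2η-ξ) ≤ (3/2)ω_λ(ξ) for all η ≥ ξ/2, and consequently D(ξ) ≥ (C₁ 2^{α-1}/α) · ω_λ(ξ) ξ^{-α}, where D(ξ) := C₁ ∫_{ξ/2}^∞ [2ω_λ(ξ) - ω_λ(2η+ξ) + ω_λ(2η-ξ)] η^{-1-α} dη. -/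
/-! For `b ≥ 0` and `c > λ`, `ω(b + c) - ω(c) = (δ/2) log (1 + b/c)`, which is at most `ω(b)`:
for `b ≤ λ` by `log (1 + t) ≤ t` and `ω(b) ≥ (3δ/4) b/λ`, for `b > λ` by `1 + b/c ≤ 2 b/λ`.
Taking `b = 2η - ξ`, `c = 2ξ` and using `ω(2ξ) = ω(ξ) + (δ/2) log 2 ≤ (3/2) ω(ξ)` (as `ω(ξ) ≥ 3δ/4`)
gives the pointwise bound; with monotonicity the bracket of `D(ξ)` lies in `[ω(ξ)/2, 2ω(ξ)]`,
and integrating `(ω(ξ)/2) η^{-1-α}` over `(ξ/2, ∞)` gives the lower bound. -/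

open MeasureTheory Real Set

noncomputable def omegaLam (δ lam μ x : ℝ) : ℝ :=
  if x ≤ lam then δ * lam⁻¹ * x - δ/4 * lam ^ (-(1+μ)) * x ^ (1+μ)
  else 3*δ/4 + δ/2 * log (x/lam)

section omegaLam

variable {δ lam μ x : ℝ}

@[fun_prop]
theorem measurable_omegaLam : Measurable (omegaLam δ lam μ) :=
  Measurable.ite measurableSet_Iic (by fun_prop) (by fun_prop)

theorem omegaLam_of_le (hlam : 0 < lam) (hx : 0 ≤ x) (hxl : x ≤ lam) :
    omegaLam δ lam μ x = δ * (x/lam) - δ/4 * (x/lam) ^ (1+μ) := by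
  rw [omegaLam, if_pos hxl, div_rpow hx hlam.le, rpow_neg hlam.le]
  ring

theorem omegaLam_of_lt (hx : lam < x) : omegaLam δ lam μ x = 3*δ/4 + δ/2 * log (x/lam) := by
  rw [omegaLam, if_neg (not_le.2 hx)]

theorem omegaLam_le_mul_div (hδ : 0 ≤ δ) (hlam : 0 < lam) (hx : 0 ≤ x) (hxl : x ≤ lam) :
    omegaLam δ lam μ x ≤ δ * (x/lam) := by
  rw [omegaLam_of_le hlam hx hxl]
  have : 0 ≤ (x/lam) ^ (1+μ) := by positivity
  nlinarith

theorem mul_div_le_omegaLam (hδ : 0 ≤ δ) (hlam : 0 < lam) (hμ : 0 ≤ μ) (hx : 0 ≤ x)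
    (hxl : x ≤ lam) : 3*δ/4 * (x/lam) ≤ omegaLam δ lam μ x := by
  rw [omegaLam_of_le hlam hx hxl]
  have : (x/lam) ^ (1+μ) ≤ x/lam :=
    rpow_le_self_of_le_one (by positivity) ((div_le_one hlam).2 hxl) (by linarith)
  nlinarith

theorem omegaLam_add_le (hδ : 0 ≤ δ) (hlam : 0 < lam) (hμ : 0 ≤ μ) {b c : ℝ} (hb : 0 ≤ b)
    (hc : lam < c) : omegaLam δ lam μ (b + c) ≤ omegaLam δ lam μ b + omegaLam δ lam μ c := by
  have hc0 : 0 < c := hlam.trans hc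
  have hgrowth : omegaLam δ lam μ (b + c) - omegaLam δ lam μ c = δ/2 * log (1 + b/c) := by
    rw [omegaLam_of_lt (by linarith), omegaLam_of_lt hc, add_sub_add_left_eq_sub, ← mul_sub,
      ← log_div (by positivity) (by positivity)]
    congr 2
    field_simp
    ring
  rcases le_or_gt b lam with hbl | hbl
  · have : log (1 + b/c) ≤ b/lam := by
      have := log_le_sub_one_of_pos (by positivity : 0 < 1 + b/c)
      linarith [div_le_div_of_nonneg_left hb hlam hc.le]
    have : 0 ≤ b/lam := by positivity
    nlinarith [mul_div_le_omegaLam (μ := μ) hδ hlam hμ hb hbl]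
  · have : log (1 + b/c) ≤ log 2 + log (b/lam) := by
      rw [← log_mul two_ne_zero (div_pos (hlam.trans hbl) hlam).ne']
      refine log_le_log (by positivity) ?_
      have : b/c ≤ b/lam := div_le_div_of_nonneg_left hb hlam hc.le
      have : 1 ≤ b/lam := (one_le_div hlam).2 hbl.le
      linarith
    rw [omegaLam_of_lt hbl]
    nlinarith [log_two_lt_d9]

theorem three_mul_div_four_le_omegaLam (hδ : 0 ≤ δ) (hlam : 0 < lam) (hx : lam < x) :
    3*δ/4 ≤ omegaLam δ lam μ x := by
  rw [omegaLam_of_lt hx]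
  have : 0 ≤ log (x / lam) := log_nonneg ((one_le_div hlam).2 hx.le)
  nlinarith

theorem omegaLam_two_mul (hlam : 0 < lam) (hx : lam < x) :
    omegaLam δ lam μ (2 * x) = omegaLam δ lam μ x + δ/2 * log 2 := by
  rw [omegaLam_of_lt (by linarith), omegaLam_of_lt hx, mul_div_assoc 2 x lam,
    log_mul two_ne_zero (div_pos (hlam.trans hx) hlam).ne']
  ring

theorem omegaLam_two_mul_le (hδ : 0 ≤ δ) (hlam : 0 < lam) (hx : lam < x) :
    omegaLam δ lam μ (2 * x) ≤ 3/2 * omegaLam δ lam μ x := by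
  rw [omegaLam_two_mul hlam hx]
  nlinarith [three_mul_div_four_le_omegaLam (μ := μ) hδ hlam hx, log_two_lt_d9]

theorem omegaLam_le_omegaLam (hδ : 0 ≤ δ) (hlam : 0 < lam) {a b : ℝ} (hb : 0 ≤ b)
    (hba : b ≤ a) (ha : 2 * lam ≤ a) : omegaLam δ lam μ b ≤ omegaLam δ lam μ a := by
  have hlog : log 2 ≤ log (a/lam) := log_le_log two_pos ((le_div_iff₀ hlam).2 ha)
  rw [omegaLam_of_lt (x := a) (by linarith)]
  rcases le_or_gt b lam with hbl | hbl
  · have : δ * (b/lam) ≤ δ := mul_le_of_le_one_right hδ ((div_le_one hlam).2 hbl)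
    nlinarith [omegaLam_le_mul_div (μ := μ) hδ hlam hb hbl, log_two_gt_d9]
  · rw [omegaLam_of_lt hbl]
    have : log (b/lam) ≤ log (a/lam) :=
      log_le_log (div_pos (hlam.trans hbl) hlam) (div_le_div_of_nonneg_right hba hlam.le)
    nlinarith

theorem omegaLam_add_sub_le (hδ : 0 ≤ δ) (hlam : 0 < lam) (hμ : 0 ≤ μ) {ξ η : ℝ}
    (hξ : lam < ξ) (hη : ξ/2 ≤ η) :
    omegaLam δ lam μ (2*η+ξ) - omegaLam δ lam μ (2*η-ξ) ≤ 3/2 * omegaLam δ lam μ ξ := by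
  have := omegaLam_add_le hδ hlam hμ (b := 2*η-ξ) (c := 2*ξ) (by linarith) (by linarith)
  rw [show 2*η-ξ + 2*ξ = 2*η+ξ by ring] at this
  linarith [omegaLam_two_mul_le (μ := μ) hδ hlam hξ]

end omegaLam

theorem le_setIntegral_Ioi_div_rpow {g : ℝ → ℝ} {a α c C : ℝ} (ha : 0 < a) (hα : 0 < α)
    (hc : 0 ≤ c) (hg : AEStronglyMeasurable g (volume.restrict (Ioi a)))
    (hlow : ∀ η ∈ Ioi a, c ≤ g η) (hup : ∀ η ∈ Ioi a, g η ≤ C) :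
    c * (a ^ (-α) / α) ≤ ∫ η in Ioi a, g η / η ^ (1+α) := by
  have hexp : -(1+α) < -1 := by linarith
  have hweight : IntegrableOn (fun η : ℝ => η ^ (-(1+α))) (Ioi a) :=
    integrableOn_Ioi_rpow_of_lt hexp ha
  have hdiv : ∀ η ∈ Ioi a, g η / η ^ (1+α) = g η * η ^ (-(1+α)) := fun η hη => by
    rw [rpow_neg (ha.trans hη).le, div_eq_mul_inv]
  have hint : IntegrableOn (fun η => g η / η ^ (1+α)) (Ioi a) := by
    refine (hweight.const_mul C).mono' ?_ ?_
    · exact hg.div₀ (by fun_prop)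
    · filter_upwards [ae_restrict_mem measurableSet_Ioi] with η hη
      have hw : 0 ≤ η ^ (-(1+α)) := rpow_nonneg (ha.trans hη).le _
      rw [hdiv η hη, norm_mul, norm_of_nonneg hw,
        norm_of_nonneg (hc.trans (hlow η hη))]
      exact mul_le_mul_of_nonneg_right (hup η hη) hw
  calc c * (a ^ (-α) / α) = ∫ η in Ioi a, c * η ^ (-(1+α)) := by
        rw [integral_const_mul, integral_Ioi_rpow_of_lt hexp ha,
          show -(1+α) + 1 = -α by ring, neg_div_neg_eq]
    _ ≤ ∫ η in Ioi a, g η / η ^ (1+α) :=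
        setIntegral_mono_on (hweight.const_mul c) hint measurableSet_Ioi fun η hη => by
          rw [hdiv η hη]
          exact mul_le_mul_of_nonneg_right (hlow η hη) (rpow_nonneg (ha.trans hη).le _)

theorem stmt_5_general (α μ δ lam C₁ : ℝ) (hα : α ∈ Set.Ioo (0:ℝ) 2)
    (hμ : 0 < μ) (hδ : 0 < δ) (hlam : 0 < lam) (hC₁ : 0 < C₁)
    (ω : ℝ → ℝ)
    (hω : ∀ ξ, ω ξ = if ξ ≤ lam then δ * lam⁻¹ * ξ - δ/4 * lam ^ (-(1+μ)) * ξ ^ (1+μ)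
                     else 3*δ/4 + δ/2 * Real.log (ξ/lam))
    (ξ : ℝ) (hξ : lam < ξ) :
    (∀ η, ξ/2 ≤ η → ω (2*η+ξ) - ω (2*η-ξ) ≤ 3/2 * ω ξ) ∧
    C₁ * (∫ η in Set.Ioi (ξ/2), (2*ω ξ - ω (2*η+ξ) + ω (2*η-ξ)) / η^(1+α))
      ≥ C₁ * 2^(α-1) / α * ω ξ * ξ^(-α) := by
  obtain rfl : ω = omegaLam δ lam μ := funext hω
  have hξ0 : 0 < ξ := hlam.trans hξ
  have hωξ := three_mul_div_four_le_omegaLam (μ := μ) hδ.le hlam hξ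
  refine ⟨fun η hη => omegaLam_add_sub_le hδ.le hlam hμ.le hξ hη, ?_⟩
  calc C₁ * 2^(α-1) / α * omegaLam δ lam μ ξ * ξ^(-α)
      = C₁ * (omegaLam δ lam μ ξ / 2 * ((ξ/2) ^ (-α) / α)) := by
        rw [div_rpow hξ0.le zero_le_two, rpow_neg zero_le_two, rpow_sub_one two_ne_zero]
        field_simp
    _ ≤ _ := by
      gcongr
      refine le_setIntegral_Ioi_div_rpow (C := 2 * omegaLam δ lam μ ξ) (half_pos hξ0) hα.1
        (by linarith) (by fun_prop) (fun η hη => ?_) (fun η hη => ?_)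
      · linarith [omegaLam_add_sub_le hδ.le hlam hμ.le hξ (le_of_lt hη)]
      · linarith [omegaLam_le_omegaLam (μ := μ) hδ.le hlam (a := 2*η+ξ) (b := 2*η-ξ)
          (by linarith [mem_Ioi.1 hη]) (by linarith) (by linarith [mem_Ioi.1 hη])]

theorem stmt_5 (α μ δ lam C₁ : ℝ) (hα : α ∈ Set.Ioo (0:ℝ) 2)
    (hμ : 0 < μ) (hμ' : μ < min α 1) (hδ : 0 < δ) (hlam : 0 < lam) (hC₁ : 0 < C₁)
    (ω : ℝ → ℝ)
    (hω : ∀ ξ, ω ξ = if ξ ≤ lam then δ * lam⁻¹ * ξ - δ/4 * lam ^ (-(1+μ)) * ξ ^ (1+μ)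
                     else 3*δ/4 + δ/2 * Real.log (ξ/lam))
    (ξ : ℝ) (hξ : lam < ξ) :
    (∀ η, ξ/2 ≤ η → ω (2*η+ξ) - ω (2*η-ξ) ≤ 3/2 * ω ξ) ∧
    C₁ * (∫ η in Set.Ioi (ξ/2), (2*ω ξ - ω (2*η+ξ) + ω (2*η-ξ)) / η^(1+α))
      ≥ C₁ * 2^(α-1) / α * ω ξ * ξ^(-α) :=
  stmt_5_general α μ δ lam C₁ hα hμ hδ hlam hC₁ ω hω ξ hξ
end
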